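/- arXiv:1911.13191 — 7 statements merged into one kernel-verified Lean document; each statement's English description precedes it below -/
import Mathlib

section
/- (Triangle inequality for Δ) For all natural numbers i, k, i', k', i'', k'', one has Δ(a_i b_k, a_{i'} b_{k'}) ≤ Δ(a_i b_k, a_{i''} b_{k''}) + Δ(a_{i''} b_{k''}, a_{i'} b_{k'}). -/
/-- The indicator function of a proposition, with integer values. -/
def chi (P : Prop) [Decidable P] : ℤ := if P then 1 else 0

/-- The minimal difference `Δ(a_i b_j, a_k b_l)` from the generalised Primc identity. -/
def Δ (i j k l : ℕ) : ℤ :=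
  chi (i ≥ k) - chi (i = j ∧ j = k) + chi (j ≤ l) - chi (j = k ∧ k = l)

lemma chi_spec (P : Prop) [Decidable P] : (chi P = 1 ∧ P) ∨ (chi P = 0 ∧ ¬P) := by
  unfold chi; split_ifs with h
  · exact Or.inl ⟨rfl, h⟩
  · exact Or.inr ⟨rfl, h⟩

lemma f_tri (i k i' i'' k'' : ℕ) :
    chi (i ≥ i') - chi (i = k ∧ k = i') ≤
      (chi (i ≥ i'') - chi (i = k ∧ k = i'')) + (chi (i'' ≥ i') - chi (i'' = k'' ∧ k'' = i')) := by
  have h1 := chi_spec (i ≥ i')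
  have h2 := chi_spec (i = k ∧ k = i')
  have h3 := chi_spec (i ≥ i'')
  have h4 := chi_spec (i = k ∧ k = i'')
  have h5 := chi_spec (i'' ≥ i')
  have h6 := chi_spec (i'' = k'' ∧ k'' = i')
  omega

lemma g_tri (k i' k' i'' k'' : ℕ) :
    chi (k ≤ k') - chi (k = i' ∧ i' = k') ≤
      (chi (k ≤ k'') - chi (k = i'' ∧ i'' = k'')) + (chi (k'' ≤ k') - chi (k'' = i' ∧ i' = k')) := by
  have h1 := chi_spec (k ≤ k')
  have h2 := chi_spec (k = i' ∧ i' = k')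
  have h3 := chi_spec (k ≤ k'')
  have h4 := chi_spec (k = i'' ∧ i'' = k'')
  have h5 := chi_spec (k'' ≤ k')
  have h6 := chi_spec (k'' = i' ∧ i' = k')
  omega

/-- Triangle inequality for `Δ`. -/
theorem delta_triangle (i k i' k' i'' k'' : ℕ) :
    Δ i k i' k' ≤ Δ i k i'' k'' + Δ i'' k'' i' k' := by
  unfold Δ
  have hf := f_tri i k i' i'' k''
  have hg := g_tri k i' k' i'' k''
  linarith
end

section
/- (Left and right insertion) Let i, j, k, ℓ be natural numbers with j ≠ k, i ≠ j, k ≠ ℓ. Then Δ(a_i b_j, a_j b_j) + Δ(a_j b_j, a_k b_k) + Δ(a_k b_k, a_k b_ℓ) − Δ(a_i b_j, a_k b_ℓ) equals the sum of the right-insertion defect (χ(i > j) + χ(j > k) − χ(i ≥ k)) and the left-insertion defect (χ(j < k) + χ(k < ℓ) − χ(j ≤ ℓ)); in particular it equals 0, 1, or 2. -/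
lemma chi_congr (P Q : Prop) [Decidable P] [Decidable Q] (h : P ↔ Q) : chi P = chi Q := by
  simp [chi, h]
lemma chi_of_not (P : Prop) [Decidable P] (h : ¬P) : chi P = 0 := by simp [chi, h]
lemma chi_of (P : Prop) [Decidable P] (h : P) : chi P = 1 := by simp [chi, h]

set_option maxHeartbeats 2000000 in
/-- Left and right insertion: for `j ≠ k`, `i ≠ j`, `k ≠ l`, the total defect equals
the sum of the right-insertion defect and the left-insertion defect; in particular
it equals `0`, `1`, or `2`. -/
theorem delta_left_right_insertion (i j k l : ℕ) (hjk : j ≠ k) (hij : i ≠ j) (hkl : k ≠ l) :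
    Δ i j j j + Δ j j k k + Δ k k k l - Δ i j k l =
      (chi (i > j) + chi (j > k) - chi (i ≥ k)) + (chi (j < k) + chi (k < l) - chi (j ≤ l)) ∧
    (Δ i j j j + Δ j j k k + Δ k k k l - Δ i j k l = 0 ∨
     Δ i j j j + Δ j j k k + Δ k k k l - Δ i j k l = 1 ∨
     Δ i j j j + Δ j j k k + Δ k k k l - Δ i j k l = 2) := by
  simp only [Δ, eq_self_iff_true, and_true, true_and,
    chi_of True trivial, chi_of_not (i = j) hij, chi_of_not (j = k) hjk,
    chi_of_not (k = l) hkl, chi_of_not (i = j ∧ j = k) (fun h => hij h.1),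
    chi_of_not (j = k ∧ k = l) (fun h => hjk h.1)]
  have c0 : chi (i ≥ j) = 1 ∧ (i ≥ j) ∨ chi (i ≥ j) = 0 ∧ ¬(i ≥ j) := by
    by_cases h : (i ≥ j) <;> simp [chi, h]
  have c1 : chi (j ≤ j) = 1 ∧ (j ≤ j) ∨ chi (j ≤ j) = 0 ∧ ¬(j ≤ j) := by
    by_cases h : (j ≤ j) <;> simp [chi, h]
  have c2 : chi (j ≥ k) = 1 ∧ (j ≥ k) ∨ chi (j ≥ k) = 0 ∧ ¬(j ≥ k) := by
    by_cases h : (j ≥ k) <;> simp [chi, h]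
  have c3 : chi (j ≤ k) = 1 ∧ (j ≤ k) ∨ chi (j ≤ k) = 0 ∧ ¬(j ≤ k) := by
    by_cases h : (j ≤ k) <;> simp [chi, h]
  have c4 : chi (k ≥ k) = 1 ∧ (k ≥ k) ∨ chi (k ≥ k) = 0 ∧ ¬(k ≥ k) := by
    by_cases h : (k ≥ k) <;> simp [chi, h]
  have c5 : chi (k ≤ l) = 1 ∧ (k ≤ l) ∨ chi (k ≤ l) = 0 ∧ ¬(k ≤ l) := by
    by_cases h : (k ≤ l) <;> simp [chi, h]
  have c6 : chi (i ≥ k) = 1 ∧ (i ≥ k) ∨ chi (i ≥ k) = 0 ∧ ¬(i ≥ k) := by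
    by_cases h : (i ≥ k) <;> simp [chi, h]
  have c7 : chi (j ≤ l) = 1 ∧ (j ≤ l) ∨ chi (j ≤ l) = 0 ∧ ¬(j ≤ l) := by
    by_cases h : (j ≤ l) <;> simp [chi, h]
  have c8 : chi (i > j) = 1 ∧ (i > j) ∨ chi (i > j) = 0 ∧ ¬(i > j) := by
    by_cases h : (i > j) <;> simp [chi, h]
  have c9 : chi (j > k) = 1 ∧ (j > k) ∨ chi (j > k) = 0 ∧ ¬(j > k) := by
    by_cases h : (j > k) <;> simp [chi, h]
  have c10 : chi (j < k) = 1 ∧ (j < k) ∨ chi (j < k) = 0 ∧ ¬(j < k) := by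
    by_cases h : (j < k) <;> simp [chi, h]
  have c11 : chi (k < l) = 1 ∧ (k < l) ∨ chi (k < l) = 0 ∧ ¬(k < l) := by
    by_cases h : (k < l) <;> simp [chi, h]
  generalize chi (i ≥ j) = x0 at *
  generalize chi (j ≤ j) = x1 at *
  generalize chi (j ≥ k) = x2 at *
  generalize chi (j ≤ k) = x3 at *
  generalize chi (k ≥ k) = x4 at *
  generalize chi (k ≤ l) = x5 at *
  generalize chi (i ≥ k) = x6 at *
  generalize chi (j ≤ l) = x7 at *
  generalize chi (i > j) = x8 at *
  generalize chi (j > k) = x9 at *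
  generalize chi (j < k) = x10 at *
  generalize chi (k < l) = x11 at *
  constructor <;> omega
end

section
/- (Characterization of zero differences) For natural numbers i, j, k, ℓ, one has Δ(a_i b_j, a_k b_ℓ) = 0 if and only if one of the following holds: (1) i = j = k = ℓ; (2) i ≠ j, k = ℓ, and i < k ≤ j; (3) i = j, k ≠ ℓ, and ℓ < i ≤ k; (4) i ≠ j, k ≠ ℓ, i < k, and j > ℓ. -/
/-- Characterization of zero differences: `Δ(a_i b_j, a_k b_l) = 0` if and only if one of:
(1) `i = j = k = l`; (2) `i ≠ j`, `k = l`, and `i < k ≤ j`;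
(3) `i = j`, `k ≠ l`, and `l < i ≤ k`; (4) `i ≠ j`, `k ≠ l`, `i < k`, and `j > l`. -/
theorem delta_eq_zero_iff (i j k l : ℕ) :
    Δ i j k l = 0 ↔
      (i = j ∧ j = k ∧ k = l) ∨
      (i ≠ j ∧ k = l ∧ i < k ∧ k ≤ j) ∨
      (i = j ∧ k ≠ l ∧ l < i ∧ i ≤ k) ∨
      (i ≠ j ∧ k ≠ l ∧ i < k ∧ j > l) := by
  simp only [Δ, chi]
  split_ifs <;> omega
end

section
/- (Symmetry of the function g under reversal) For all non-negative integers u ≤ v and integers x_1, …, x_v, one has g_{u,v}(q^{-1}; 2−x_1, …, 2−x_v) = q^{−u(2v+u−1)} · g_{u,v}(q; x_1, …, x_v), where g_{u,v}(q; x_1,…,x_v) = Σ over (ε_1,…,ε_v) ∈ {0,1}^v with ε_1+⋯+ε_v = u of q^{uv + C(u,2)} · Π_{k=1}^{v} q^{(x_k−1)·(ε_1+⋯+ε_{k−1})}, with C(u,2) = u(u−1)/2. -/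
/-- The function `g_{u,v}(q; x_1, …, x_v)` from Proposition 2.17 of Dousse–Konan,
`g_{u,v}(q;x) = Σ_{ε ∈ {0,1}^v, Σε = u} q^{uv + C(u,2)} Π_{k=1}^{v} q^{(x_k−1)(ε_1+⋯+ε_{k−1})}`,
encoded by summing over the `u`-element subsets `A` of `{0,…,v−1}` (the positions where
`ε = 1`, zero-indexed). -/
def g {K : Type*} [Field K] (q : K) (u v : ℕ) (x : ℕ → ℤ) : K :=
  ∑ A ∈ (Finset.range v).powersetCard u,
    q ^ (u * v + u.choose 2) *
      ∏ k ∈ Finset.range v, q ^ ((x k - 1) * ((A.filter (· < k)).card : ℤ))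

/-- Symmetry of `g` under reversal: for `u ≤ v` and a nonzero `q`,
`g_{u,v}(q^{−1}; 2−x_1, …, 2−x_v) = q^{−u(2v+u−1)} g_{u,v}(q; x_1, …, x_v)`. -/
theorem g_symmetry {K : Type*} [Field K] (q : K) (hq : q ≠ 0) (u v : ℕ) (huv : u ≤ v)
    (x : ℕ → ℤ) :
    g q⁻¹ u v (fun k => 2 - x k) = q ^ (-(u * (2 * v + u - 1) : ℤ)) * g q u v x := by
  have hn : ∀ m : ℕ, 2 * m.choose 2 + m = m * m := by
    intro m
    induction m with
    | zero => simp
    | succ n ih =>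
      rw [Nat.choose_succ_succ, Nat.choose_one_right]
      nlinarith [ih]
  have h2 : (2 * (u.choose 2 : ℤ) + u = u * u) := by exact_mod_cast hn u
  have hpref : (q⁻¹ : K) ^ (u * v + u.choose 2)
      = q ^ (-(u * (2 * v + u - 1) : ℤ)) * q ^ (u * v + u.choose 2) := by
    rw [inv_pow, ← zpow_natCast q (u * v + u.choose 2), ← zpow_neg, ← zpow_add₀ hq]
    congr 1
    push_cast
    ring_nf
    linarith [h2]
  unfold g
  rw [Finset.mul_sum]
  refine Finset.sum_congr rfl fun A hA => ?_
  have hprod : ∀ k, (q⁻¹ : K) ^ (((fun k => 2 - x k) k - 1) * ((A.filter (· < k)).card : ℤ))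
      = q ^ ((x k - 1) * ((A.filter (· < k)).card : ℤ)) := by
    intro k
    rw [inv_zpow, ← zpow_neg]
    ring_nf
  simp only [hprod]
  rw [hpref, mul_assoc]
end

section
/- (q-binomial box decomposition) For a positive integer s and non-negative integers m and u with u ≤ m, one has 1/(q;q)_{s+m} = Σ_{m' ≥ 0} q^{(m'−u)(s+m')} / (q;q)_{s+m'} · qbinom(m−u, m'−u), where the sum effectively runs over u ≤ m' ≤ m. -/
/-!
Writing `M = m - u` and replacing `s` by `s + u`, the claim becomes
`1/(q;q)_{s+M} = Σ_{k ≤ M} q^{k(s+k)}/(q;q)_{s+k} · [M, k]_q`, which holds for any `x` in a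
field whose q-Pochhammer symbols do not vanish. Induct on `M` for all `s` at once: q-Pascal splits
`[M+1, k+1]_x` into `[M, k+1]_x + x^{M-k} [M, k]_x`; the first halves reassemble into the case
`(M, s)`, the second into `x^{s+M+1}` times the case `(M, s+1)`, and
`1/(x;x)_N + x^{N+1}/(x;x)_{N+1} = 1/(x;x)_{N+1}` closes the step. Power series over `ℚ` embed
into the field of Laurent series, where this applies to `x = q`.
-/

open PowerSeries

/-- The finite q-Pochhammer symbol `(q;q)_N = Π_{j=1}^{N} (1 − q^j)` as a formal power
series in `q` over `ℚ`. -/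
noncomputable def qp (N : ℕ) : PowerSeries ℚ :=
  ∏ j ∈ Finset.Icc 1 N, (1 - (PowerSeries.X : PowerSeries ℚ) ^ j)

/-- The Gaussian binomial coefficient `qbinom n k = (q;q)_n / ((q;q)_k (q;q)_{n−k})`,
equal to `0` when `k > n`. -/
noncomputable def qbinom (n k : ℕ) : PowerSeries ℚ :=
  if k ≤ n then qp n * (qp k)⁻¹ * (qp (n - k))⁻¹ else 0

open Finset

section CommRing

variable {R : Type*} [CommRing R]

def qPochhammer (x : R) (N : ℕ) : R :=
  ∏ j ∈ Icc 1 N, (1 - x ^ j)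

@[simp]
lemma qPochhammer_zero_right (x : R) : qPochhammer x 0 = 1 := by
  simp [qPochhammer]

lemma qPochhammer_succ (x : R) (N : ℕ) :
    qPochhammer x (N + 1) = qPochhammer x N * (1 - x ^ (N + 1)) :=
  prod_Icc_succ_top (by omega) _

@[simp]
lemma qPochhammer_zero_left (N : ℕ) : qPochhammer (0 : R) N = 1 :=
  prod_eq_one fun j hj => by rw [zero_pow (by grind), sub_zero]

lemma map_qPochhammer {S : Type*} [CommRing S] (f : R →+* S) (x : R) (N : ℕ) :
    f (qPochhammer x N) = qPochhammer (f x) N := by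
  simp [qPochhammer, map_prod]

lemma constantCoeff_qPochhammer_X (N : ℕ) : constantCoeff (qPochhammer (X : R⟦X⟧) N) = 1 := by
  rw [map_qPochhammer, constantCoeff_X, qPochhammer_zero_left]

end CommRing

section Field

variable {K : Type*} [Field K] {x : K}

def gaussBinom (x : K) (n k : ℕ) : K :=
  if k ≤ n then qPochhammer x n * (qPochhammer x k)⁻¹ * (qPochhammer x (n - k))⁻¹ else 0

lemma gaussBinom_of_lt {n k : ℕ} (h : n < k) : gaussBinom x n k = 0 :=
  if_neg (by omega)

lemma gaussBinom_zero_right {n : ℕ} (h : qPochhammer x n ≠ 0) : gaussBinom x n 0 = 1 := by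
  simp [gaussBinom, h]

variable (hx : ∀ N, qPochhammer x N ≠ 0)
include hx

lemma one_sub_pow_succ_ne_zero (N : ℕ) : 1 - x ^ (N + 1) ≠ 0 :=
  right_ne_zero_of_mul (qPochhammer_succ x N ▸ hx (N + 1))

lemma gaussBinom_self (n : ℕ) : gaussBinom x n n = 1 := by
  simp [gaussBinom, hx]

lemma gaussBinom_succ_succ (n k : ℕ) :
    gaussBinom x (n + 1) (k + 1) = gaussBinom x n (k + 1) + x ^ (n - k) * gaussBinom x n k := by
  rcases lt_trichotomy k n with hkn | rfl | hnk
  · obtain ⟨d, rfl⟩ := Nat.exists_eq_add_of_lt hkn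
    have hsub₁ : k + d + 1 + 1 - (k + 1) = d + 1 := by omega
    have hsub₂ : k + d + 1 - (k + 1) = d := by omega
    have hsub₃ : k + d + 1 - k = d + 1 := by omega
    simp only [gaussBinom, if_pos (by omega : k + 1 ≤ k + d + 1 + 1),
      if_pos (by omega : k + 1 ≤ k + d + 1), if_pos (by omega : k ≤ k + d + 1),
      hsub₁, hsub₂, hsub₃, qPochhammer_succ x (k + d + 1), qPochhammer_succ x k,
      qPochhammer_succ x d]
    have := hx (k + d + 1)
    have := hx k
    have := hx d
    have := one_sub_pow_succ_ne_zero hx k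
    have := one_sub_pow_succ_ne_zero hx d
    -- cleared of denominators: `1 - x^(k+d+2) = (1 - x^(d+1)) + x^(d+1) (1 - x^(k+1))`
    field_simp
    ring
  · rw [gaussBinom_self hx, gaussBinom_self hx, gaussBinom_of_lt (Nat.lt_succ_self k)]
    simp
  · rw [gaussBinom_of_lt (by omega), gaussBinom_of_lt (by omega), gaussBinom_of_lt hnk]
    simp

lemma inv_qPochhammer_succ (N : ℕ) :
    (qPochhammer x (N + 1))⁻¹ =
      (qPochhammer x N)⁻¹ + x ^ (N + 1) * (qPochhammer x (N + 1))⁻¹ := by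
  have := hx N
  have := one_sub_pow_succ_ne_zero hx N
  rw [qPochhammer_succ]
  field_simp
  ring

theorem inv_qPochhammer_eq_sum_gaussBinom (M s : ℕ) :
    (qPochhammer x (s + M))⁻¹ =
      ∑ k ∈ range (M + 1),
        x ^ (k * (s + k)) * (qPochhammer x (s + k))⁻¹ * gaussBinom x M k := by
  induction M generalizing s with
  | zero => simp [gaussBinom_zero_right (hx 0)]
  | succ M ih =>
    have hpascal : ∀ j ∈ range (M + 1),
        x ^ ((j + 1) * (s + (j + 1))) * (qPochhammer x (s + (j + 1)))⁻¹ *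
            gaussBinom x (M + 1) (j + 1) =
          x ^ ((j + 1) * (s + (j + 1))) * (qPochhammer x (s + (j + 1)))⁻¹ *
              gaussBinom x M (j + 1) +
            x ^ (s + M + 1) *
              (x ^ (j * (s + 1 + j)) * (qPochhammer x (s + 1 + j))⁻¹ * gaussBinom x M j) := by
      intro j hj
      obtain ⟨d, rfl⟩ := Nat.exists_eq_add_of_le (Nat.lt_succ_iff.mp (mem_range.mp hj))
      rw [gaussBinom_succ_succ hx, Nat.add_sub_cancel_left, show s + (j + 1) = s + 1 + j by omega]
      ring
    calc (qPochhammer x (s + (M + 1)))⁻¹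
        = (qPochhammer x (s + M))⁻¹ + x ^ (s + M + 1) * (qPochhammer x (s + 1 + M))⁻¹ := by
          rw [← add_assoc, inv_qPochhammer_succ hx, add_right_comm]
      _ = ∑ k ∈ range (M + 2),
              x ^ (k * (s + k)) * (qPochhammer x (s + k))⁻¹ * gaussBinom x M k
            + x ^ (s + M + 1) * ∑ j ∈ range (M + 1),
                x ^ (j * (s + 1 + j)) * (qPochhammer x (s + 1 + j))⁻¹ * gaussBinom x M j := by
          rw [ih, ih, sum_range_succ _ (M + 1), gaussBinom_of_lt (Nat.lt_succ_self M), mul_zero,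
            add_zero]
      _ = _ := by
          rw [sum_range_succ' _ (M + 1), sum_range_succ' _ (M + 1), sum_congr rfl hpascal,
            sum_add_distrib, ← mul_sum, gaussBinom_zero_right (hx M),
            gaussBinom_zero_right (hx (M + 1))]
          ring

end Field

lemma map_inv_of_constantCoeff_ne_zero {k L : Type*} [Field k] [Field L] (f : k⟦X⟧ →+* L)
    {φ : k⟦X⟧} (h : constantCoeff φ ≠ 0) : f φ⁻¹ = (f φ)⁻¹ :=
  eq_inv_of_mul_eq_one_right (by rw [← map_mul, PowerSeries.mul_inv_cancel φ h, map_one])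

section Transfer

variable {L : Type*} [Field L] (f : ℚ⟦X⟧ →+* L)

lemma qp_eq_qPochhammer (N : ℕ) : qp N = qPochhammer X N := rfl

lemma map_inv_qp (N : ℕ) : f (qp N)⁻¹ = (qPochhammer (f X) N)⁻¹ := by
  rw [map_inv_of_constantCoeff_ne_zero f (by simp [qp_eq_qPochhammer, constantCoeff_qPochhammer_X]),
    qp_eq_qPochhammer, map_qPochhammer]

lemma map_qbinom (n k : ℕ) : f (qbinom n k) = gaussBinom (f X) n k := by
  unfold qbinom gaussBinom
  split_ifs
  · rw [map_mul, map_mul, map_inv_qp, map_inv_qp, qp_eq_qPochhammer, map_qPochhammer]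
  · exact map_zero f

lemma qPochhammer_map_X_ne_zero (hf : Function.Injective f) (N : ℕ) :
    qPochhammer (f X) N ≠ 0 := by
  rw [← map_qPochhammer, map_ne_zero_iff f hf]
  intro h
  simpa [h] using constantCoeff_qPochhammer_X (R := ℚ) N

end Transfer

theorem qbinom_box_decomposition_general (s : ℕ) (m u : ℕ) (hu : u ≤ m) :
    (qp (s + m))⁻¹ =
      ∑ m' ∈ Finset.Icc u m,
        (PowerSeries.X : PowerSeries ℚ) ^ ((m' - u) * (s + m')) * (qp (s + m'))⁻¹ *
          qbinom (m - u) (m' - u) := by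
  have hι := HahnSeries.ofPowerSeries_injective (Γ := ℤ) (R := ℚ)
  have key := inv_qPochhammer_eq_sum_gaussBinom (qPochhammer_map_X_ne_zero _ hι) (m - u) (s + u)
  rw [show s + u + (m - u) = s + m by omega] at key
  apply hι
  simp only [map_sum, map_mul, map_pow, map_inv_qp, map_qbinom]
  rw [key, ← Ico_add_one_right_eq_Icc, sum_Ico_eq_sum_range, Nat.sub_add_comm hu]
  refine sum_congr rfl fun k _ => ?_
  rw [Nat.add_sub_cancel_left, add_assoc]

/-- q-binomial box decomposition: for a positive integer `s` and `u ≤ m`,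
`1/(q;q)_{s+m} = Σ_{m'=u}^{m} q^{(m'−u)(s+m')}/(q;q)_{s+m'} · qbinom(m−u, m'−u)`. -/
theorem qbinom_box_decomposition (s : ℕ) (hs : 0 < s) (m u : ℕ) (hu : u ≤ m) :
    (qp (s + m))⁻¹ =
      ∑ m' ∈ Finset.Icc u m,
        (PowerSeries.X : PowerSeries ℚ) ^ ((m' - u) * (s + m')) * (qp (s + m'))⁻¹ *
          qbinom (m - u) (m' - u) :=
  qbinom_box_decomposition_general s m u hu
end

section
/- (Chain decomposition of a Gaussian binomial) For non-negative integers m, ℓ_1, …, ℓ_t, one has q^m · qbinom(m + ℓ_1 + ⋯ + ℓ_t − 1, m) = q^m · Σ over chains 0 = x_0 ≤ x_1 ≤ ⋯ ≤ x_t = m of Π_{r=1}^{t} q^{ℓ_r x_{r−1}} · qbinom(x_r − x_{r−1} + ℓ_r − 1, x_r − x_{r−1}), with the convention qbinom(−1, 0) = 1. -/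
open PowerSeries Finset

lemma qp_zero : qp 0 = 1 := by simp [qp]

lemma qp_succ (N : ℕ) : qp (N + 1) = qp N * (1 - X ^ (N + 1)) := by
  rw [qp, qp, prod_Icc_succ_top (by omega)]

lemma constantCoeff_qp (N : ℕ) : constantCoeff (qp N) = 1 := by
  rw [qp, map_prod]
  exact prod_eq_one fun j hj => by simp [zero_pow (by simp at hj; omega : j ≠ 0)]

lemma qp_mul_inv_cancel (N : ℕ) : qp N * (qp N)⁻¹ = 1 :=
  PowerSeries.mul_inv_cancel _ (by simp [constantCoeff_qp])

lemma qp_ne_zero (N : ℕ) : qp N ≠ 0 := fun h => by simpa [h] using constantCoeff_qp N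

lemma qbinom_zero_right (n : ℕ) : qbinom n 0 = 1 := by
  simp [qbinom, qp_zero, qp_mul_inv_cancel]

lemma qbinom_self (n : ℕ) : qbinom n n = 1 := by
  simp [qbinom, qp_zero, qp_mul_inv_cancel]

lemma qbinom_of_lt {n k : ℕ} (h : n < k) : qbinom n k = 0 := if_neg (not_le.2 h)

lemma qp_mul_qp_mul_qbinom {n k j : ℕ} (h : k + j = n) : qp k * qp j * qbinom n k = qp n := by
  subst h
  rw [qbinom, if_pos (Nat.le_add_right k j), Nat.add_sub_cancel_left]
  linear_combination (qp (k + j) * qp j * (qp j)⁻¹) * qp_mul_inv_cancel k +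
    qp (k + j) * qp_mul_inv_cancel j

lemma qbinom_succ_succ (n k : ℕ) :
    qbinom (n + 1) (k + 1) = qbinom n k + X ^ (k + 1) * qbinom n (k + 1) := by
  rcases lt_trichotomy k n with hlt | rfl | hgt
  · obtain ⟨j, rfl⟩ := Nat.exists_eq_add_of_lt hlt
    have hk := qp_mul_qp_mul_qbinom (k := k) (j := j + 1) (n := k + j + 1) (by ring)
    have hk1 := qp_mul_qp_mul_qbinom (k := k + 1) (j := j) (n := k + j + 1) (by ring)
    have hn := qp_mul_qp_mul_qbinom (k := k + 1) (j := j + 1) (n := k + j + 1 + 1) (by ring)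
    apply mul_left_cancel₀ (mul_ne_zero (qp_ne_zero (k + 1)) (qp_ne_zero (j + 1)))
    rw [qp_succ j] at hk
    rw [qp_succ k] at hk1
    rw [hn, qp_succ k, qp_succ j, qp_succ (k + j + 1)]
    linear_combination -(1 - X ^ (k + 1)) * hk - X ^ (k + 1) * (1 - X ^ (j + 1)) * hk1
  · rw [qbinom_self, qbinom_self, qbinom_of_lt (Nat.lt_succ_self k), mul_zero, add_zero]
  · rw [qbinom_of_lt (by omega), qbinom_of_lt hgt, qbinom_of_lt (by omega), mul_zero, add_zero]

noncomputable def qmultichoose (b j : ℕ) : PowerSeries ℚ := qbinom (j + b - 1) j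

lemma qmultichoose_zero_right (b : ℕ) : qmultichoose b 0 = 1 := qbinom_zero_right _

lemma qmultichoose_zero_succ (j : ℕ) : qmultichoose 0 (j + 1) = 0 := qbinom_of_lt (by omega)

lemma qmultichoose_succ_succ (b j : ℕ) :
    qmultichoose (b + 1) (j + 1) =
      qmultichoose (b + 1) j + X ^ (j + 1) * qmultichoose b (j + 1) := by
  simpa only [qmultichoose, show j + 1 + (b + 1) - 1 = j + b + 1 by omega,
    show j + (b + 1) - 1 = j + b by omega, show j + 1 + b - 1 = j + b by omega]
    using qbinom_succ_succ (j + b) j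

theorem qmultichoose_add_eq (a b m : ℕ) :
    qmultichoose (a + b) m =
      ∑ p ∈ antidiagonal m, X ^ (b * p.1) * qmultichoose a p.1 * qmultichoose b p.2 := by
  symm
  induction b generalizing m with
  | zero =>
    cases m with
    | zero => simp [qmultichoose_zero_right]
    | succ m => simp [Nat.sum_antidiagonal_succ', qmultichoose_zero_right, qmultichoose_zero_succ]
  | succ b ihb =>
    induction m with
    | zero => simp [qmultichoose_zero_right]
    | succ m ihm =>
      have hb := ihb (m + 1)
      rw [Nat.sum_antidiagonal_succ'] at hb ⊢
      have hshift : ∀ p ∈ antidiagonal m, X ^ ((b + 1) * p.1) * qmultichoose a p.1 *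
          (X ^ (p.2 + 1) * qmultichoose b (p.2 + 1)) =
            X ^ (m + 1) * (X ^ (b * p.1) * qmultichoose a p.1 * qmultichoose b (p.2 + 1)) := by
        intro p hp
        rw [HasAntidiagonal.mem_antidiagonal] at hp
        rw [← hp]
        ring
      simp only [qmultichoose_succ_succ, mul_add, sum_add_distrib, ihm, sum_congr rfl hshift,
        ← mul_sum, qmultichoose_zero_right, mul_one] at hb ⊢
      rw [← add_assoc a b 1, qmultichoose_succ_succ (a + b)]
      linear_combination X ^ (m + 1) * hb

def chains (t m : ℕ) : Finset (Fin (t + 1) → ℕ) :=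
  (Fintype.piFinset fun _ : Fin (t + 1) => range (m + 1)).filter
    (fun x => (∀ r : Fin t, x r.castSucc ≤ x r.succ) ∧ x 0 = 0 ∧ x (Fin.last t) = m)

lemma mem_chains {t m : ℕ} {x : Fin (t + 1) → ℕ} :
    x ∈ chains t m ↔
      (∀ r : Fin t, x r.castSucc ≤ x r.succ) ∧ x 0 = 0 ∧ x (Fin.last t) = m := by
  simp only [chains, mem_filter, Fintype.mem_piFinset, mem_range, and_iff_right_iff_imp]
  rintro ⟨hstep, -, hlast⟩ i
  have := Fin.monotone_iff_le_succ.2 hstep (Fin.le_last i)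
  omega

lemma chains_zero (m : ℕ) : chains 0 m = if m = 0 then {0} else ∅ := by
  ext x
  split_ifs with hm
  · subst hm
    simp [mem_chains, funext_iff, Fin.forall_fin_one]
  · simp only [mem_chains, notMem_empty, iff_false]
    rintro ⟨-, h0, hlast⟩
    exact hm (hlast.symm.trans h0)

lemma mem_chains_succ {t m : ℕ} {x : Fin (t + 2) → ℕ} :
    x ∈ chains (t + 1) m ↔
      Fin.init x ∈ chains t (x (Fin.last t).castSucc) ∧ x (Fin.last t).castSucc ≤ m ∧
        x (Fin.last (t + 1)) = m := by
  simp only [mem_chains, Fin.forall_fin_succ' (n := t), Fin.init, Fin.succ_last, Fin.castSucc_zero,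
    ← Fin.succ_castSucc]
  constructor
  · rintro ⟨⟨hstep, hle⟩, h0, rfl⟩
    exact ⟨⟨hstep, h0, trivial⟩, hle, rfl⟩
  · rintro ⟨⟨hstep, h0, -⟩, hle, rfl⟩
    exact ⟨⟨hstep, hle⟩, h0, rfl⟩

lemma sum_chains_succ {M : Type*} [AddCommMonoid M] (t m : ℕ) (f : (Fin (t + 2) → ℕ) → M) :
    ∑ x ∈ chains (t + 1) m, f x =
      ∑ k ∈ range (m + 1), ∑ y ∈ chains t k, f (Fin.snoc y m) := by
  rw [sum_sigma']
  refine sum_bij' (fun x _ => ⟨x (Fin.last t).castSucc, Fin.init x⟩)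
    (fun p _ => Fin.snoc p.2 m) ?_ ?_ ?_ ?_ ?_
  · intro x hx
    obtain ⟨hinit, hle, -⟩ := mem_chains_succ.1 hx
    simpa [Nat.lt_succ_iff, hle] using hinit
  · rintro ⟨k, y⟩ hy
    obtain ⟨hk, hy⟩ : k ∈ range (m + 1) ∧ y ∈ chains t k := mem_sigma.1 hy
    have hlast := (mem_chains.1 hy).2.2
    refine mem_chains_succ.2 ⟨?_, ?_, ?_⟩ <;>
      simp only [Fin.init_snoc, Fin.snoc_castSucc, Fin.snoc_last, hlast]
    · exact hy
    · exact Nat.lt_succ_iff.1 (mem_range.1 hk)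
  · intro x hx
    rw [← (mem_chains_succ.1 hx).2.2]
    exact Fin.snoc_init_self x
  · rintro ⟨k, y⟩ hy
    simp only [mem_sigma, mem_chains] at hy
    simp [Fin.init_snoc, hy.2.2.2]
  · intro x hx
    rw [← (mem_chains_succ.1 hx).2.2, Fin.snoc_init_self]

noncomputable def chainWeight {t : ℕ} (ℓ : Fin t → ℕ) (x : Fin (t + 1) → ℕ) :
    PowerSeries ℚ :=
  ∏ r : Fin t, X ^ (ℓ r * x r.castSucc) * qmultichoose (ℓ r) (x r.succ - x r.castSucc)

lemma chainWeight_snoc {t : ℕ} (ℓ : Fin (t + 1) → ℕ) (y : Fin (t + 1) → ℕ) (m : ℕ) :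
    chainWeight ℓ (Fin.snoc y m) = chainWeight (Fin.init ℓ) y *
      (X ^ (ℓ (Fin.last t) * y (Fin.last t)) *
        qmultichoose (ℓ (Fin.last t)) (m - y (Fin.last t))) := by
  simp [chainWeight, Fin.prod_univ_castSucc, Fin.init, Fin.succ_castSucc, -Fin.castSucc_succ]

theorem sum_chainWeight {t : ℕ} (ℓ : Fin t → ℕ) (m : ℕ) :
    ∑ x ∈ chains t m, chainWeight ℓ x = qmultichoose (∑ r, ℓ r) m := by
  induction t generalizing m with
  | zero =>
    cases m <;> simp [chains_zero, chainWeight, qmultichoose_zero_right, qmultichoose_zero_succ]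
  | succ t ih =>
    have hfiber : ∀ k ∈ range (m + 1), ∑ y ∈ chains t k, chainWeight ℓ (Fin.snoc y m) =
        X ^ (ℓ (Fin.last t) * k) * qmultichoose (∑ r, Fin.init ℓ r) k *
          qmultichoose (ℓ (Fin.last t)) (m - k) := by
      intro k _
      rw [← ih (Fin.init ℓ) k, mul_sum, sum_mul]
      refine sum_congr rfl fun y hy => ?_
      rw [chainWeight_snoc, (mem_chains.1 hy).2.2]
      ring
    rw [sum_chains_succ, sum_congr rfl hfiber, ← Nat.sum_antidiagonal_eq_sum_range_succ_mk
      (fun p => X ^ (ℓ (Fin.last t) * p.1) * qmultichoose (∑ r, Fin.init ℓ r) p.1 *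
          qmultichoose (ℓ (Fin.last t)) p.2), ← qmultichoose_add_eq, Fin.sum_univ_castSucc]
    rfl

/-- Chain decomposition of a Gaussian binomial:
`q^m·qbinom(m+ℓ_1+⋯+ℓ_t−1, m) = q^m·Σ_{0=x_0≤x_1≤⋯≤x_t=m} Π_{r=1}^{t}
q^{ℓ_r x_{r−1}}·qbinom(x_r−x_{r−1}+ℓ_r−1, x_r−x_{r−1})`. -/
theorem gaussian_binomial_chain_decomposition (m t : ℕ) (ℓ : Fin t → ℕ) :
    (PowerSeries.X : PowerSeries ℚ) ^ m * qbinom (m + ∑ r, ℓ r - 1) m =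
      (PowerSeries.X : PowerSeries ℚ) ^ m *
        ∑ x ∈ (Fintype.piFinset fun _ : Fin (t + 1) => Finset.range (m + 1)).filter
            (fun x => (∀ r : Fin t, x r.castSucc ≤ x r.succ) ∧ x 0 = 0 ∧ x (Fin.last t) = m),
          ∏ r : Fin t,
            (PowerSeries.X : PowerSeries ℚ) ^ (ℓ r * x r.castSucc) *
              qbinom (x r.succ - x r.castSucc + ℓ r - 1) (x r.succ - x r.castSucc) :=
  congrArg (X ^ m * ·) (sum_chainWeight ℓ m).symm
end

section
/- (q-Vandermonde-type convolution used in the proof of the kernel theorem) For a positive integer s and non-negative integers u, one has the identity of formal power series: Σ_{m ≥ 0} q^m/(q;q)_{s+m} · qbinom(s+m−1, m−u) = Σ_{m ≥ 0} q^{(m−u)(s+m)+m}/(q;q)_{s+m}² · qbinom(s+m−1, m−u). -/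
/-!
Put `n = s + u` and `m = u + k`. Pulling `q^u / (q;q)_{n-1}` out of both sides leaves
`L(n) = Σ_k q^k / ((q;q)_k (1 - q^{n+k}))` and
`R(n) = Σ_k q^{k(n+k+1)} / ((q;q)_k (q;q)_{n+k} (1 - q^{n+k}))`.
Creative telescoping in `k` shows that `(1 - q^n) F(n) + q^{n+1} F(n+1)` does not depend on `n`,
both for `F = L` and for `F = R`; and for `n` large both `L(n)` and `R(n)` agree with
`1/(q;q)_∞` to high order. As `1 - q^n` is invertible, this first-order relation recovers `F(n)`
from `F(n+1)`, so `L = R` by descending induction on `n`. All of this is carried out on partial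
sums modulo a power of `q`, where the telescoping remainders vanish.
-/

open PowerSeries Finset

namespace QVandermonde

theorem eq_zero_of_rec_of_eventually_zero {R : Type*} [CommRing R] {F c d : ℕ → R}
    {n₀ N₀ : ℕ} (hc : ∀ n ≥ n₀, IsUnit (c n))
    (hrec : ∀ n ≥ n₀,
      c n * F n + d n * F (n + 1) = c (n + 1) * F (n + 1) + d (n + 1) * F (n + 2))
    (hF : ∀ n > N₀, F n = 0) {n : ℕ} (hn : n₀ ≤ n) : F n = 0 := by
  have hcomb : ∀ n ≥ n₀, c n * F n + d n * F (n + 1) = 0 := by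
    intro n hn
    have hconst : ∀ j, c n * F n + d n * F (n + 1) =
        c (n + j) * F (n + j) + d (n + j) * F (n + j + 1) := by
      intro j
      induction j with
      | zero => rfl
      | succ j ih => rw [ih, hrec _ (by omega)]; rfl
    rw [hconst (N₀ + 1), hF _ (by omega), hF _ (by omega), mul_zero, mul_zero, add_zero]
  suffices ∀ j, ∀ n ≥ n₀, N₀ < n + j → F n = 0 from this (N₀ + 1) n hn (by omega)
  intro j
  induction j with
  | zero => exact fun n _ h => hF n h
  | succ j ih =>
    intro n hn h
    have := hcomb n hn
    rw [ih (n + 1) (by omega) (by omega), mul_zero, add_zero] at this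
    exact (hc n hn).mul_right_eq_zero.mp this

theorem constantCoeff_one_sub_X_pow {R : Type*} [CommRing R] {m : ℕ} (hm : m ≠ 0) :
    constantCoeff (1 - X ^ m : R⟦X⟧) = 1 := by
  simp [zero_pow hm]

theorem isUnit_one_sub_X_pow {R : Type*} [CommRing R] {m : ℕ} (hm : m ≠ 0) :
    IsUnit (1 - X ^ m : R⟦X⟧) := by
  rw [isUnit_iff_constantCoeff, constantCoeff_one_sub_X_pow hm]
  exact isUnit_one

theorem algebraMap_fractionRing_inv {k : Type*} [Field k] {f : k⟦X⟧}
    (hf : constantCoeff f ≠ 0) :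
    algebraMap k⟦X⟧ (FractionRing k⟦X⟧) f⁻¹ = (algebraMap k⟦X⟧ (FractionRing k⟦X⟧) f)⁻¹ := by
  refine eq_inv_of_mul_eq_one_right ?_
  rw [← map_mul, PowerSeries.mul_inv_cancel f hf, map_one]

theorem constantCoeff_qp (n : ℕ) : constantCoeff (qp n) = 1 := by
  simp only [qp, map_prod, map_sub, map_one, map_pow, constantCoeff_X]
  exact prod_eq_one fun j hj => by simp [zero_pow (by grind : j ≠ 0)]

theorem qp_zero : qp 0 = 1 := by
  simp [qp]

theorem qp_succ (n : ℕ) : qp (n + 1) = qp n * (1 - X ^ (n + 1)) :=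
  prod_Icc_succ_top (by omega) _

theorem inv_qp_succ_mul_qp (n : ℕ) : (qp (n + 1))⁻¹ * qp n = (1 - X ^ (n + 1))⁻¹ := by
  rw [qp_succ, PowerSeries.mul_inv_rev, mul_assoc,
    PowerSeries.inv_mul_cancel _ (by simp [constantCoeff_qp]), mul_one]

theorem sum_range_X_pow_mul_inv_qp (K : ℕ) :
    ∑ k ∈ range (K + 1), X ^ k * (qp k)⁻¹ = (qp K)⁻¹ := by
  induction K with
  | zero => simp [qp_zero]
  | succ K ih =>
    rw [sum_range_succ, ih, qp_succ, PowerSeries.mul_inv_rev]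
    have hK := PowerSeries.mul_inv_cancel (1 - X ^ (K + 1) : ℚ⟦X⟧)
      (by simp [constantCoeff_one_sub_X_pow (Nat.succ_ne_zero K)])
    linear_combination -(qp K)⁻¹ * hK

theorem qbinom_add_self (j k : ℕ) : qbinom (j + k) k = qp (j + k) * (qp k)⁻¹ * (qp j)⁻¹ := by
  rw [qbinom, if_pos (Nat.le_add_left k j), Nat.add_sub_cancel]

local notation "ι" => algebraMap ℚ⟦X⟧ (FractionRing ℚ⟦X⟧)

theorem map_inv_qp (k : ℕ) : ι (qp k)⁻¹ = (ι (qp k))⁻¹ :=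
  algebraMap_fractionRing_inv (by simp [constantCoeff_qp])

theorem map_qp_ne_zero (k : ℕ) : ι (qp k) ≠ 0 := by
  rw [map_ne_zero_iff _ (IsFractionRing.injective _ _)]
  exact fun h => by simpa [h] using constantCoeff_qp k

theorem map_inv_one_sub_X_pow {m : ℕ} (hm : m ≠ 0) : ι (1 - X ^ m)⁻¹ = (1 - ι X ^ m)⁻¹ := by
  rw [algebraMap_fractionRing_inv (by simp [constantCoeff_one_sub_X_pow hm])]
  simp

theorem one_sub_map_X_pow_ne_zero {m : ℕ} (hm : m ≠ 0) : 1 - ι X ^ m ≠ 0 := by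
  have : ι (1 - X ^ m) ≠ 0 := by
    rw [map_ne_zero_iff _ (IsFractionRing.injective _ _)]
    exact fun h => by simpa [h] using constantCoeff_one_sub_X_pow (R := ℚ) hm
  simpa using this

noncomputable def lhsTerm (n k : ℕ) : ℚ⟦X⟧ :=
  X ^ k * (qp k)⁻¹ * (1 - X ^ (n + k))⁻¹

noncomputable def rhsTerm (n k : ℕ) : ℚ⟦X⟧ :=
  X ^ (k * (n + k + 1)) * (qp k)⁻¹ * (qp (n + k))⁻¹ * (1 - X ^ (n + k))⁻¹

/-- Zeilberger certificate for `rhsTerm_rec`; it is divisible by `X ^ k`, so its value at the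
upper end of a partial sum is negligible. -/
noncomputable def rhsCert (n k : ℕ) : ℚ⟦X⟧ :=
  X ^ (k * (n + k + 1)) * (1 - X ^ k) * (qp k)⁻¹ * (qp (n + k))⁻¹ *
    (X ^ n * (1 - X ^ (n + k))⁻¹ - ((1 - X ^ (n + k + 1))⁻¹) ^ 2)

theorem lhsTerm_rec {n : ℕ} (hn : 1 ≤ n) (k : ℕ) :
    (1 - X ^ n) * lhsTerm n k + X ^ (n + 1) * lhsTerm (n + 1) k =
      X ^ k * (qp k)⁻¹ +
        (X ^ n * (1 - X ^ (k + 1)) * lhsTerm n (k + 1) - X ^ n * (1 - X ^ k) * lhsTerm n k) := by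
  apply IsFractionRing.injective ℚ⟦X⟧ (FractionRing ℚ⟦X⟧)
  simp only [lhsTerm, show n + 1 + k = n + k + 1 by omega,
    show n + (k + 1) = n + k + 1 by omega, qp_succ k, PowerSeries.mul_inv_rev, map_mul, map_sub,
    map_add, map_pow, map_one, map_inv_qp, map_inv_one_sub_X_pow (show n + k ≠ 0 by omega),
    map_inv_one_sub_X_pow (show n + k + 1 ≠ 0 by omega),
    map_inv_one_sub_X_pow (show k + 1 ≠ 0 by omega)]
  have := map_qp_ne_zero k
  have := one_sub_map_X_pow_ne_zero (show n + k ≠ 0 by omega)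
  have := one_sub_map_X_pow_ne_zero (show n + k + 1 ≠ 0 by omega)
  have := one_sub_map_X_pow_ne_zero (show k + 1 ≠ 0 by omega)
  field_simp
  ring

theorem rhsTerm_rec {n : ℕ} (hn : 1 ≤ n) (k : ℕ) :
    (1 - X ^ n) * rhsTerm n k + X ^ (n + 1) * rhsTerm (n + 1) k
      - ((1 - X ^ (n + 1)) * rhsTerm (n + 1) k + X ^ (n + 2) * rhsTerm (n + 2) k) =
    rhsCert n (k + 1) - rhsCert n k := by
  have e1 : qp (n + k + 1) = qp (n + k) * (1 - X ^ (n + k + 1)) := qp_succ _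
  have e2 : qp (n + k + 2) = qp (n + k) * (1 - X ^ (n + k + 1)) * (1 - X ^ (n + k + 2)) := by
    rw [qp_succ (n + k + 1), qp_succ]
  apply IsFractionRing.injective ℚ⟦X⟧ (FractionRing ℚ⟦X⟧)
  simp only [rhsTerm, rhsCert, show n + 1 + k = n + k + 1 by omega,
    show n + 2 + k = n + k + 2 by omega, show n + (k + 1) = n + k + 1 by omega,
    show n + k + 1 + 1 = n + k + 2 by omega, e1, e2, qp_succ k, PowerSeries.mul_inv_rev,
    map_mul, map_sub, map_pow, map_add, map_one, map_inv_qp,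
    map_inv_one_sub_X_pow (show n + k ≠ 0 by omega),
    map_inv_one_sub_X_pow (show n + k + 1 ≠ 0 by omega),
    map_inv_one_sub_X_pow (show n + k + 2 ≠ 0 by omega),
    map_inv_one_sub_X_pow (show k + 1 ≠ 0 by omega)]
  have := map_qp_ne_zero k
  have := map_qp_ne_zero (n + k)
  have := one_sub_map_X_pow_ne_zero (show n + k ≠ 0 by omega)
  have := one_sub_map_X_pow_ne_zero (show n + k + 1 ≠ 0 by omega)
  have := one_sub_map_X_pow_ne_zero (show n + k + 2 ≠ 0 by omega)
  have := one_sub_map_X_pow_ne_zero (show k + 1 ≠ 0 by omega)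
  field_simp
  ring

noncomputable def lhsSum (n K : ℕ) : ℚ⟦X⟧ := ∑ k ∈ range K, lhsTerm n k

noncomputable def rhsSum (n K : ℕ) : ℚ⟦X⟧ := ∑ k ∈ range K, rhsTerm n k

theorem lhsSum_rec {n : ℕ} (hn : 1 ≤ n) (K : ℕ) :
    (1 - X ^ n) * lhsSum n K + X ^ (n + 1) * lhsSum (n + 1) K =
      ∑ k ∈ range K, X ^ k * (qp k)⁻¹ + X ^ n * (1 - X ^ K) * lhsTerm n K := by
  rw [lhsSum, lhsSum, mul_sum, mul_sum, ← sum_add_distrib,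
    sum_congr rfl fun k _ => lhsTerm_rec hn k, sum_add_distrib,
    sum_range_sub (fun k => X ^ n * (1 - X ^ k) * lhsTerm n k)]
  simp

theorem rhsSum_rec {n : ℕ} (hn : 1 ≤ n) (K : ℕ) :
    (1 - X ^ n) * rhsSum n K + X ^ (n + 1) * rhsSum (n + 1) K
      - ((1 - X ^ (n + 1)) * rhsSum (n + 1) K + X ^ (n + 2) * rhsSum (n + 2) K) =
    rhsCert n K := by
  rw [rhsSum, rhsSum, rhsSum, mul_sum, mul_sum, mul_sum, mul_sum, ← sum_add_distrib,
    ← sum_add_distrib, ← sum_sub_distrib, sum_congr rfl fun k _ => rhsTerm_rec hn k,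
    sum_range_sub (rhsCert n)]
  simp [rhsCert]

/-- Reduction modulo `X ^ (K + 1)`: it retains exactly the coefficients of index `0, …, K`. -/
noncomputable abbrev reduceModX (K : ℕ) : ℚ⟦X⟧ →+* ℚ⟦X⟧ ⧸ Ideal.span {(X : ℚ⟦X⟧) ^ (K + 1)} :=
  Ideal.Quotient.mk _

theorem reduceModX_X_pow {K m : ℕ} (h : K < m) : reduceModX K (X ^ m) = 0 :=
  (Ideal.Quotient.eq_zero_iff_dvd _ _).2 (pow_dvd_pow X h)

theorem reduceModX_inv_one_sub_X_pow {K m : ℕ} (h : K < m) :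
    reduceModX K (1 - X ^ m)⁻¹ = 1 := by
  have hunit : reduceModX K (1 - X ^ m) = 1 := by
    rw [map_sub, map_one, reduceModX_X_pow h, sub_zero]
  calc reduceModX K (1 - X ^ m)⁻¹ = reduceModX K (1 - X ^ m) * reduceModX K (1 - X ^ m)⁻¹ := by
        rw [hunit, one_mul]
    _ = 1 := by
        rw [← map_mul, PowerSeries.mul_inv_cancel _
          (by simp [constantCoeff_one_sub_X_pow (show m ≠ 0 by omega)]), map_one]

theorem reduceModX_inv_qp {K n : ℕ} (h : K ≤ n) :
    reduceModX K (qp n)⁻¹ = reduceModX K (qp K)⁻¹ := by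
  induction n, h using Nat.le_induction with
  | base => rfl
  | succ n hn ih =>
    rw [qp_succ, PowerSeries.mul_inv_rev, map_mul, reduceModX_inv_one_sub_X_pow (by omega),
      one_mul, ih]

theorem reduceModX_lhsSum_of_lt {K n : ℕ} (h : K < n) :
    reduceModX K (lhsSum n (K + 1)) = reduceModX K (qp K)⁻¹ := by
  rw [← sum_range_X_pow_mul_inv_qp, lhsSum, map_sum, map_sum]
  refine sum_congr rfl fun k _ => ?_
  rw [lhsTerm, map_mul, reduceModX_inv_one_sub_X_pow (by omega), mul_one]

theorem reduceModX_rhsSum_of_lt {K n : ℕ} (h : K < n) :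
    reduceModX K (rhsSum n (K + 1)) = reduceModX K (qp K)⁻¹ := by
  have hpos : ∀ k ∈ range K, reduceModX K (rhsTerm n (k + 1)) = 0 := fun k _ => by
    rw [rhsTerm, map_mul, map_mul, map_mul, reduceModX_X_pow (by nlinarith), zero_mul, zero_mul,
      zero_mul]
  rw [rhsSum, sum_range_succ', map_add, map_sum, sum_eq_zero hpos, zero_add, rhsTerm]
  simp only [zero_mul, pow_zero, qp_zero, inv_one, add_zero, one_mul, map_mul,
    reduceModX_inv_one_sub_X_pow h, mul_one, reduceModX_inv_qp h.le]

theorem reduceModX_lhsSum_rec {n : ℕ} (hn : 1 ≤ n) (K : ℕ) :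
    reduceModX K ((1 - X ^ n) * lhsSum n (K + 1) + X ^ (n + 1) * lhsSum (n + 1) (K + 1)) =
      reduceModX K (qp K)⁻¹ := by
  simp only [lhsSum_rec hn, sum_range_X_pow_mul_inv_qp, lhsTerm, map_add, map_mul,
    reduceModX_X_pow (lt_add_one K), zero_mul, mul_zero, add_zero]

theorem reduceModX_rhsSum_rec {n : ℕ} (hn : 1 ≤ n) (K : ℕ) :
    reduceModX K ((1 - X ^ n) * rhsSum n (K + 1) + X ^ (n + 1) * rhsSum (n + 1) (K + 1)) =
      reduceModX K
        ((1 - X ^ (n + 1)) * rhsSum (n + 1) (K + 1) + X ^ (n + 2) * rhsSum (n + 2) (K + 1)) := by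
  have hK : K < (K + 1) * (n + (K + 1) + 1) := by nlinarith
  rw [← sub_eq_zero, ← map_sub, rhsSum_rec hn, rhsCert]
  simp only [map_mul, reduceModX_X_pow hK, zero_mul]

theorem X_pow_dvd_lhsSum_sub_rhsSum {n : ℕ} (hn : 1 ≤ n) (K : ℕ) :
    X ^ K ∣ lhsSum n K - rhsSum n K := by
  cases K with
  | zero => exact one_dvd _
  | succ K =>
    rw [← Ideal.Quotient.eq_zero_iff_dvd, map_sub]
    refine eq_zero_of_rec_of_eventually_zero
      (F := fun n => reduceModX K (lhsSum n (K + 1)) - reduceModX K (rhsSum n (K + 1)))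
      (c := fun n => reduceModX K (1 - X ^ n)) (d := fun n => reduceModX K (X ^ (n + 1)))
      (N₀ := K) (fun n hn => (isUnit_one_sub_X_pow (by omega)).map (reduceModX K))
      (fun n hn => ?_) (fun n hn => ?_) hn
    · have hl := reduceModX_lhsSum_rec hn K
      have hl' := reduceModX_lhsSum_rec (n := n + 1) (by omega) K
      have hr := reduceModX_rhsSum_rec hn K
      simp only [map_add, map_mul] at hl hl' hr ⊢
      linear_combination hl - hl' - hr
    · simp only [reduceModX_lhsSum_of_lt hn, reduceModX_rhsSum_of_lt hn, sub_self]

theorem lhs_summand (j u k : ℕ) :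
    X ^ (u + k) * (qp (j + 1 + (u + k)))⁻¹ * qbinom (j + 1 + (u + k) - 1) (u + k - u) =
      X ^ u * (qp (j + u))⁻¹ * lhsTerm (j + u + 1) k := by
  rw [show j + 1 + (u + k) - 1 = j + u + k by omega,
    show j + 1 + (u + k) = j + u + k + 1 by omega, Nat.add_sub_cancel_left, qbinom_add_self,
    lhsTerm, show j + u + 1 + k = j + u + k + 1 by omega, ← inv_qp_succ_mul_qp]
  ring

theorem rhs_summand (j u k : ℕ) :
    X ^ ((u + k - u) * (j + 1 + (u + k)) + (u + k)) * ((qp (j + 1 + (u + k)))⁻¹) ^ 2 *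
        qbinom (j + 1 + (u + k) - 1) (u + k - u) =
      X ^ u * (qp (j + u))⁻¹ * rhsTerm (j + u + 1) k := by
  rw [show j + 1 + (u + k) - 1 = j + u + k by omega,
    show j + 1 + (u + k) = j + u + k + 1 by omega, Nat.add_sub_cancel_left, qbinom_add_self,
    rhsTerm, show j + u + 1 + k = j + u + k + 1 by omega, ← inv_qp_succ_mul_qp,
    show k * (j + u + k + 1) + (u + k) = u + k * (j + u + k + 1 + 1) by ring]
  ring

theorem sum_Icc_lhs (j u M : ℕ) :
    ∑ m ∈ Icc u M, X ^ m * (qp (j + 1 + m))⁻¹ * qbinom (j + 1 + m - 1) (m - u) =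
      X ^ u * (qp (j + u))⁻¹ * lhsSum (j + u + 1) (M + 1 - u) := by
  rw [← Ico_add_one_right_eq_Icc, sum_Ico_eq_sum_range, lhsSum, mul_sum]
  exact sum_congr rfl fun k _ => lhs_summand j u k

theorem sum_Icc_rhs (j u M : ℕ) :
    ∑ m ∈ Icc u M, X ^ ((m - u) * (j + 1 + m) + m) * ((qp (j + 1 + m))⁻¹) ^ 2 *
        qbinom (j + 1 + m - 1) (m - u) =
      X ^ u * (qp (j + u))⁻¹ * rhsSum (j + u + 1) (M + 1 - u) := by
  rw [← Ico_add_one_right_eq_Icc, sum_Ico_eq_sum_range, rhsSum, mul_sum]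
  exact sum_congr rfl fun k _ => rhs_summand j u k

end QVandermonde

/-- q-Vandermonde-type convolution used in the proof of the kernel theorem:
`Σ_{m ≥ u} q^m/(q;q)_{s+m} · qbinom(s+m−1, m−u)
  = Σ_{m ≥ u} q^{(m−u)(s+m)+m}/(q;q)_{s+m}² · qbinom(s+m−1, m−u)`,
stated coefficientwise: the `N`-th coefficients of the partial sums over `u ≤ m ≤ M`
agree for every `M ≥ N` (terms with `m > N` do not contribute to the `N`-th
coefficient, so this expresses the identity of the formal power series). -/
theorem q_vandermonde_convolution (s : ℕ) (hs : 0 < s) (u N M : ℕ) (hNM : N ≤ M) :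
    (PowerSeries.coeff (R := ℚ) N)
        (∑ m ∈ Finset.Icc u M,
          (PowerSeries.X : PowerSeries ℚ) ^ m * (qp (s + m))⁻¹ * qbinom (s + m - 1) (m - u)) =
      (PowerSeries.coeff (R := ℚ) N)
        (∑ m ∈ Finset.Icc u M,
          (PowerSeries.X : PowerSeries ℚ) ^ ((m - u) * (s + m) + m) * ((qp (s + m))⁻¹) ^ 2 *
            qbinom (s + m - 1) (m - u)) := by
  obtain ⟨j, rfl⟩ : ∃ j, s = j + 1 := ⟨s - 1, by omega⟩
  rw [QVandermonde.sum_Icc_lhs, QVandermonde.sum_Icc_rhs, ← sub_eq_zero, ← map_sub, ← mul_sub]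
  have hdvd : (X : ℚ⟦X⟧) ^ (N + 1) ∣ X ^ u * X ^ (M + 1 - u) := by
    rw [← pow_add]
    exact pow_dvd_pow X (by omega)
  refine X_pow_dvd_iff.1 (hdvd.trans (mul_dvd_mul (dvd_mul_right _ _) ?_)) N (lt_add_one N)
  exact QVandermonde.X_pow_dvd_lhsSum_sub_rhsSum (by omega) _
end
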